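/- For every integer k ≥ 1, the identity U_{2k}(x/2) · Σ_{n≥1} |A_{2n−1}^{(k)}| x^{2n} = −x U_{2k−1}(x/2) holds in ℚ⟦x⟧. -/

import Mathlib

/-- Number of alternating sequences of length `n` bounded by `k`. -/
noncomputable def altCount (k n : ℕ) : ℕ :=
  Nat.card {a : Fin n → ℤ //
    (∀ i, 1 ≤ a i ∧ a i ≤ k) ∧
    (∀ (i : ℕ) (h : i + 1 < n),
      if i % 2 = 0 then a ⟨i, Nat.lt_of_succ_lt h⟩ ≤ a ⟨i + 1, h⟩
      else a ⟨i + 1, h⟩ ≤ a ⟨i, Nat.lt_of_succ_lt h⟩)}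

/-- `U2 m` is the polynomial `U_m(x/2)`, where `U_m` is the `m`-th Chebyshev
polynomial of the second kind (indexed over `ℤ`). -/
noncomputable def U2 (m : ℤ) : Polynomial ℚ :=
  (Polynomial.Chebyshev.U ℚ m).comp (Polynomial.C (1/2 : ℚ) * Polynomial.X)

open Finset
open scoped Classical

namespace S3

/-! ### Combinatorial part -/

def altPred (k n : ℕ) (a : Fin n → ℤ) : Prop :=
  (∀ i, 1 ≤ a i ∧ a i ≤ k) ∧
  (∀ (i : ℕ) (h : i + 1 < n),
    if i % 2 = 0 then a ⟨i, Nat.lt_of_succ_lt h⟩ ≤ a ⟨i + 1, h⟩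
    else a ⟨i + 1, h⟩ ≤ a ⟨i, Nat.lt_of_succ_lt h⟩)

noncomputable def Tset (k n : ℕ) : Finset (Fin n → ℤ) :=
  (Fintype.piFinset fun _ => Finset.Icc (1:ℤ) (k:ℤ)).filter (altPred k n)

lemma mem_Tset {k n : ℕ} {a : Fin n → ℤ} : a ∈ Tset k n ↔ altPred k n a := by
  unfold Tset
  rw [Finset.mem_filter, Fintype.mem_piFinset]
  constructor
  · exact fun h => h.2
  · intro h; exact ⟨fun i => Finset.mem_Icc.mpr (h.1 i), h⟩

lemma altCount_eq (k n : ℕ) : altCount k n = (Tset k n).card := by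
  rw [← Nat.card_eq_finsetCard]
  exact Nat.card_congr (Equiv.subtypeEquivRight fun a => mem_Tset.symm)

lemma last_mem {k n : ℕ} {a : Fin (n+1) → ℤ} (ha : a ∈ Tset k (n+1)) :
    a (Fin.last n) ∈ Finset.Icc (1:ℤ) (k:ℤ) :=
  Finset.mem_Icc.mpr ((mem_Tset.mp ha).1 _)

noncomputable def tc (k n : ℕ) (j : ℤ) : ℕ :=
  ((Tset k (n+1)).filter fun a => a (Fin.last n) = j).card

lemma card_Tset (k n : ℕ) :
    (Tset k (n+1)).card = ∑ j ∈ Finset.Icc (1:ℤ) (k:ℤ), tc k n j :=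
  Finset.card_eq_sum_card_fiberwise fun _ ha => last_mem ha

lemma tc_zero {k : ℕ} {j : ℤ} (hj : j ∈ Finset.Icc (1:ℤ) (k:ℤ)) : tc k 0 j = 1 := by
  rw [Finset.mem_Icc] at hj
  have : (Tset k 1).filter (fun a => a (Fin.last 0) = j) = {fun _ => j} := by
    ext a
    simp only [Finset.mem_filter, Finset.mem_singleton]
    constructor
    · rintro ⟨-, h⟩
      funext i
      have : i = Fin.last 0 := Subsingleton.elim _ _
      rw [this, h]
    · rintro rfl
      refine ⟨mem_Tset.mpr ⟨fun i => hj, ?_⟩, rfl⟩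
      intro i h; omega
  rw [tc, this, Finset.card_singleton]

lemma snoc_mk_lt {n : ℕ} (f : Fin n → ℤ) (x : ℤ) (i : ℕ) (h1 : i < n) (h2 : i < n + 1) :
    (Fin.snoc f x : Fin (n+1) → ℤ) (⟨i, h2⟩ : Fin (n+1)) = f ⟨i, h1⟩ := by
  have : (⟨i, h2⟩ : Fin (n+1)) = Fin.castSucc ⟨i, h1⟩ := rfl
  rw [this, Fin.snoc_castSucc]

lemma snoc_mk_last {n : ℕ} (f : Fin n → ℤ) (x : ℤ) (h : n < n + 1) :
    (Fin.snoc f x : Fin (n+1) → ℤ) (⟨n, h⟩ : Fin (n+1)) = x := by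
  have : (⟨n, h⟩ : Fin (n+1)) = Fin.last n := rfl
  rw [this, Fin.snoc_last]

lemma tc_succ (k n : ℕ) (j : ℤ) (hj : j ∈ Finset.Icc (1:ℤ) (k:ℤ)) :
    tc k (n+1) j = ∑ i ∈ Finset.Icc (1:ℤ) (k:ℤ),
      if (if n % 2 = 0 then i ≤ j else j ≤ i) then tc k n i else 0 := by
  set s : Finset (Fin (n+1) → ℤ) :=
    (Tset k (n+1)).filter
      (fun a => if n % 2 = 0 then a (Fin.last n) ≤ j else j ≤ a (Fin.last n)) with hs
  have h1 : s.card = ∑ i ∈ Finset.Icc (1:ℤ) (k:ℤ),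
      if (if n % 2 = 0 then i ≤ j else j ≤ i) then tc k n i else 0 := by
    rw [Finset.card_eq_sum_card_fiberwise
      (f := fun a => a (Fin.last n)) (t := Finset.Icc (1:ℤ) (k:ℤ))
      (fun a ha => last_mem (Finset.mem_filter.mp ha).1)]
    refine Finset.sum_congr rfl fun i hi => ?_
    by_cases hc : (if n % 2 = 0 then i ≤ j else j ≤ i)
    · rw [if_pos hc, tc]
      congr 1
      ext a
      simp only [hs, Finset.mem_filter, and_assoc]
      constructor
      · rintro ⟨ha, -, h3⟩; exact ⟨ha, h3⟩
      · rintro ⟨ha, h3⟩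
        refine ⟨ha, ?_, h3⟩
        rw [h3]; exact hc
    · rw [if_neg hc, Finset.card_eq_zero]
      ext a
      simp only [hs, Finset.mem_filter, Finset.notMem_empty, iff_false, not_and, and_imp]
      intro ha h2 h3
      rw [h3] at h2; exact hc h2
  rw [← h1, tc]
  refine Finset.card_nbij' (fun a => Fin.init a) (fun b => Fin.snoc b j) ?_ ?_ ?_ ?_
  · intro a ha
    obtain ⟨haT, halast⟩ := Finset.mem_filter.mp ha
    obtain ⟨hb, hsq⟩ := mem_Tset.mp haT
    refine Finset.mem_filter.mpr ⟨mem_Tset.mpr ⟨fun i => hb _, ?_⟩, ?_⟩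
    · intro i h
      exact hsq i (Nat.lt_succ_of_lt h)
    · have h2 : n + 1 < n + 2 := Nat.lt_succ_self _
      have h4 := hsq n h2
      have h5 : a ⟨n+1, h2⟩ = j := halast
      split_ifs at h4 ⊢ with hpar
      · exact h5 ▸ h4
      · exact h5 ▸ h4
  · intro b hb'
    obtain ⟨hbT, hcond⟩ := Finset.mem_filter.mp hb'
    obtain ⟨hb, hsq⟩ := mem_Tset.mp hbT
    refine Finset.mem_filter.mpr ⟨mem_Tset.mpr ⟨?_, ?_⟩, by simp⟩
    · intro i
      beta_reduce
      refine Fin.lastCases ?_ ?_ i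
      · rw [Fin.snoc_last]
        rw [Finset.mem_Icc] at hj
        exact hj
      · intro i'
        rw [Fin.snoc_castSucc]
        exact hb i'
    · intro i h
      beta_reduce
      by_cases hi : i + 1 < n + 1
      · rw [snoc_mk_lt b j i (Nat.lt_of_succ_lt hi) (Nat.lt_of_succ_lt h),
          snoc_mk_lt b j (i+1) hi h]
        exact hsq i hi
      · have hieq : i = n := by omega
        subst hieq
        rw [snoc_mk_lt b j i (Nat.lt_succ_self _) (Nat.lt_of_succ_lt h),
          snoc_mk_last b j h]
        exact hcond
  · intro a ha
    obtain ⟨-, halast⟩ := Finset.mem_filter.mp ha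
    rw [← halast]
    exact Fin.snoc_init_self a
  · intro b hb
    simp

/-! ### Reindexing sums from `ℤ` intervals to `ℕ` intervals -/

lemma sum_reindex {M : Type*} [AddCommMonoid M] (k : ℕ) (g : ℤ → M) :
    ∑ j ∈ Finset.Icc (1:ℤ) (k:ℤ), g j = ∑ j ∈ Finset.Icc 1 k, g (j:ℤ) := by
  refine Finset.sum_nbij' (fun z => z.toNat) (fun m => (m:ℤ)) ?_ ?_ ?_ ?_ ?_
  · intro a ha
    simp only [Finset.mem_Icc] at ha ⊢
    omega
  · intro a ha
    simp only [Finset.mem_Icc] at ha ⊢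
    omega
  · intro a ha
    simp only [Finset.mem_Icc] at ha ⊢
    omega
  · intro a ha
    simp only [Finset.mem_Icc] at ha ⊢
    omega
  · intro a ha
    simp only [Finset.mem_Icc] at ha
    have h' : ((a.toNat : ℕ) : ℤ) = a := by omega
    simp only [h']

lemma card_Tset_nat (k n : ℕ) :
    (Tset k (n+1)).card = ∑ j ∈ Finset.Icc 1 k, tc k n (j:ℤ) := by
  rw [card_Tset, sum_reindex]

lemma tc_succ_nat (k n j : ℕ) (hj : j ∈ Finset.Icc 1 k) :
    tc k (n+1) (j:ℤ) = ∑ i ∈ Finset.Icc 1 k,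
      if (if n % 2 = 0 then i ≤ j else j ≤ i) then tc k n (i:ℤ) else 0 := by
  rw [Finset.mem_Icc] at hj
  rw [tc_succ k n (j:ℤ) (by rw [Finset.mem_Icc]; omega), sum_reindex]
  refine Finset.sum_congr rfl fun i hi => ?_
  congr 1
  simp [Nat.cast_le]

lemma tc_zero_nat (k j : ℕ) (hj : j ∈ Finset.Icc 1 k) : tc k 0 (j:ℤ) = 1 := by
  rw [Finset.mem_Icc] at hj
  exact tc_zero (by rw [Finset.mem_Icc]; omega)

/-! ### Power series part -/

noncomputable def q (m : ℤ) : PowerSeries ℚ := (U2 m : PowerSeries ℚ)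

lemma coe_sub (p r : Polynomial ℚ) :
    ((p - r : Polynomial ℚ) : PowerSeries ℚ) = (p : PowerSeries ℚ) - (r : PowerSeries ℚ) :=
  map_sub Polynomial.coeToPowerSeries.ringHom p r

lemma q_add_two (m : ℤ) : q (m + 2) = PowerSeries.X * q (m + 1) - q m := by
  have hpoly : U2 (m + 2) = Polynomial.X * U2 (m + 1) - U2 m := by
    unfold U2
    rw [Polynomial.Chebyshev.U_add_two, Polynomial.sub_comp, Polynomial.mul_comp,
      Polynomial.mul_comp, Polynomial.X_comp]
    have h2 : ((2 : Polynomial ℚ).comp (Polynomial.C (1/2:ℚ) * Polynomial.X)) = 2 := by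
      simp
    rw [h2]
    have : (2 : Polynomial ℚ) * (Polynomial.C (1/2:ℚ) * Polynomial.X) = Polynomial.X := by
      rw [← mul_assoc]
      have : (2 : Polynomial ℚ) * Polynomial.C (1/2:ℚ) = 1 := by
        rw [(map_ofNat Polynomial.C 2).symm, ← Polynomial.C_mul]
        norm_num
      rw [this, one_mul]
    rw [this]
  rw [q, q, q, hpoly, coe_sub, Polynomial.coe_mul, Polynomial.coe_X]

lemma q_zero : q 0 = 1 := by
  rw [q]
  have : U2 0 = 1 := by
    unfold U2
    rw [Polynomial.Chebyshev.U_zero, Polynomial.one_comp]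
  rw [this, Polynomial.coe_one]

lemma q_one : q 1 = PowerSeries.X := by
  rw [q]
  have : U2 1 = Polynomial.X := by
    unfold U2
    rw [Polynomial.Chebyshev.U_one, Polynomial.mul_comp, Polynomial.X_comp]
    have h2 : ((2 : Polynomial ℚ).comp (Polynomial.C (1/2:ℚ) * Polynomial.X)) = 2 := by simp
    rw [h2, ← mul_assoc]
    have : (2 : Polynomial ℚ) * Polynomial.C (1/2:ℚ) = 1 := by
      rw [(map_ofNat Polynomial.C 2).symm, ← Polynomial.C_mul]
      norm_num
    rw [this, one_mul]
  rw [this, Polynomial.coe_X]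

noncomputable def Aser (k j : ℕ) : PowerSeries ℚ :=
  PowerSeries.mk fun n => if n % 2 = 1 then (tc k (n-1) (j:ℤ) : ℚ) else 0

noncomputable def Bser (k j : ℕ) : PowerSeries ℚ :=
  PowerSeries.mk fun n => if n % 2 = 0 ∧ 0 < n then (tc k (n-1) (j:ℤ) : ℚ) else 0

lemma Aser_eq (k : ℕ) (hk : 1 ≤ k) (j : ℕ) (hj : j ∈ Finset.Icc 1 k) :
    Aser k j = PowerSeries.X +
      PowerSeries.X * ∑ i ∈ Finset.Icc 1 k, if j ≤ i then Bser k i else 0 := by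
  ext n
  rw [map_add]
  cases n with
  | zero =>
    simp [Aser, PowerSeries.coeff_zero_X_mul]
  | succ n =>
    rw [PowerSeries.coeff_succ_X_mul, PowerSeries.coeff_X, map_sum]
    simp only [Aser, Bser, PowerSeries.coeff_mk, apply_ite (PowerSeries.coeff (R := ℚ) n),
      map_natCast, map_zero]
    by_cases hpar : (n+1) % 2 = 1
    · rw [if_pos hpar]
      rcases Nat.eq_zero_or_pos n with hn0 | hn0
      · subst hn0
        rw [if_pos rfl]
        have : ∀ i ∈ Finset.Icc 1 k, (if j ≤ i then
            (if 0 % 2 = 0 ∧ 0 < 0 then ((tc k (0-1) (i:ℤ) : ℚ)) else 0) else 0) = 0 := by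
          intro i hi
          simp
        rw [Finset.sum_congr rfl this, Finset.sum_const_zero, add_zero,
          tc_zero_nat k j hj]
        norm_num
    -- n ≥ 1, n even
      · have hne : n + 1 ≠ 1 := by omega
        rw [if_neg hne, zero_add]
        have hneven : n % 2 = 0 := by omega
        have hn1 : n = (n - 1) + 1 := by omega
        have hpar2 : (n-1) % 2 = 1 := by omega
        have := tc_succ_nat k (n-1) j hj
        simp only [eq_false (show ¬ (n-1) % 2 = 0 by omega), if_false] at this
        rw [show (n+1)-1 = (n-1)+1 by omega, this]
        push_cast
        refine Finset.sum_congr rfl fun i hi => ?_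
        rw [if_pos (by omega : n % 2 = 0 ∧ 0 < n)]
    · rw [if_neg hpar, if_neg (by omega : ¬ n + 1 = 1), zero_add]
      have : ∀ i ∈ Finset.Icc 1 k, (if j ≤ i then
          (if n % 2 = 0 ∧ 0 < n then ((tc k (n-1) (i:ℤ) : ℚ)) else 0) else 0) = 0 := by
        intro i hi
        have : ¬ (n % 2 = 0 ∧ 0 < n) := by omega
        simp [this]
      rw [Finset.sum_congr rfl this, Finset.sum_const_zero]

lemma Bser_eq (k : ℕ) (hk : 1 ≤ k) (j : ℕ) (hj : j ∈ Finset.Icc 1 k) :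
    Bser k j = PowerSeries.X * ∑ i ∈ Finset.Icc 1 k, if i ≤ j then Aser k i else 0 := by
  ext n
  cases n with
  | zero =>
    simp [Bser, PowerSeries.coeff_zero_X_mul]
  | succ n =>
    rw [PowerSeries.coeff_succ_X_mul, map_sum]
    simp only [Aser, Bser, PowerSeries.coeff_mk, apply_ite (PowerSeries.coeff (R := ℚ) n),
      map_natCast, map_zero]
    by_cases hpar : (n+1) % 2 = 0
    · rw [if_pos ⟨hpar, Nat.succ_pos n⟩]
      have hnodd : n % 2 = 1 := by omega
      have hn1 : n = (n - 1) + 1 := by omega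
      have := tc_succ_nat k (n-1) j hj
      simp only [eq_true (show (n-1) % 2 = 0 by omega), if_true] at this
      rw [show (n+1)-1 = (n-1)+1 by omega, this]
      push_cast
      refine Finset.sum_congr rfl fun i hi => ?_
      rw [if_pos hnodd]
    · rw [if_neg (fun hcon => hpar hcon.1)]
      have : ∀ i ∈ Finset.Icc 1 k, (if i ≤ j then
          (if n % 2 = 1 then ((tc k (n-1) (i:ℤ) : ℚ)) else 0) else 0) = 0 := by
        intro i hi
        have : ¬ n % 2 = 1 := by omega
        simp [this]
      rw [Finset.sum_congr rfl this, Finset.sum_const_zero]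

/-! ### Closed forms -/

lemma Sdiff (k j : ℕ) (f : ℕ → PowerSeries ℚ) (hj : j ∈ Finset.Icc 1 k) :
    (∑ i ∈ Finset.Icc 1 k, if j ≤ i then f i else 0)
      = (∑ i ∈ Finset.Icc 1 k, if j + 1 ≤ i then f i else 0) + f j := by
  have h : ∀ i ∈ Finset.Icc 1 k, (if j ≤ i then f i else 0)
      = (if j + 1 ≤ i then f i else 0) + (if i = j then f i else 0) := by
    intro i hi
    by_cases h1 : i = j
    · subst h1; rw [if_pos le_rfl, if_neg (by omega), if_pos rfl, zero_add]
    · by_cases h2 : j + 1 ≤ i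
      · rw [if_pos (by omega), if_pos h2, if_neg h1, add_zero]
      · rw [if_neg (by omega), if_neg h2, if_neg h1, add_zero]
  rw [Finset.sum_congr rfl h, Finset.sum_add_distrib, Finset.sum_ite_eq' _ j f, if_pos hj]

lemma Sdiff_le (k j : ℕ) (f : ℕ → PowerSeries ℚ) (hj : j + 1 ∈ Finset.Icc 1 k) :
    (∑ i ∈ Finset.Icc 1 k, if i ≤ j + 1 then f i else 0)
      = (∑ i ∈ Finset.Icc 1 k, if i ≤ j then f i else 0) + f (j + 1) := by
  have h : ∀ i ∈ Finset.Icc 1 k, (if i ≤ j + 1 then f i else 0)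
      = (if i ≤ j then f i else 0) + (if i = j + 1 then f i else 0) := by
    intro i hi
    by_cases h1 : i = j + 1
    · subst h1; rw [if_pos le_rfl, if_neg (by omega), if_pos rfl, zero_add]
    · by_cases h2 : i ≤ j
      · rw [if_pos (by omega), if_pos h2, if_neg h1, add_zero]
      · rw [if_neg (by omega), if_neg h2, if_neg h1, add_zero]
  rw [Finset.sum_congr rfl h, Finset.sum_add_distrib, Finset.sum_ite_eq' _ (j+1) f, if_pos hj]

lemma sum_le_one (k : ℕ) (hk : 1 ≤ k) (f : ℕ → PowerSeries ℚ) :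
    (∑ i ∈ Finset.Icc 1 k, if i ≤ 1 then f i else 0) = f 1 := by
  have h : ∀ i ∈ Finset.Icc 1 k, (if i ≤ 1 then f i else 0) = (if i = 1 then f i else 0) := by
    intro i hi
    rw [Finset.mem_Icc] at hi
    by_cases h1 : i = 1
    · subst h1; rw [if_pos le_rfl, if_pos rfl]
    · rw [if_neg (by omega), if_neg h1]
  rw [Finset.sum_congr rfl h, Finset.sum_ite_eq' _ 1 f,
    if_pos (Finset.mem_Icc.mpr ⟨le_rfl, hk⟩)]

lemma sum_ge_k (k : ℕ) (hk : 1 ≤ k) (f : ℕ → PowerSeries ℚ) :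
    (∑ i ∈ Finset.Icc 1 k, if k ≤ i then f i else 0) = f k := by
  have h : ∀ i ∈ Finset.Icc 1 k, (if k ≤ i then f i else 0) = (if i = k then f i else 0) := by
    intro i hi
    rw [Finset.mem_Icc] at hi
    by_cases h1 : i = k
    · subst h1; rw [if_pos le_rfl, if_pos rfl]
    · rw [if_neg (by omega), if_neg h1]
  rw [Finset.sum_congr rfl h, Finset.sum_ite_eq' _ k f,
    if_pos (Finset.mem_Icc.mpr ⟨hk, le_rfl⟩)]

lemma closed (k : ℕ) (hk : 1 ≤ k) :
    ∀ j, 1 ≤ j → j ≤ k →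
      Aser k j = (-1 : PowerSeries ℚ)^(j-1) * q (2*(j:ℤ)-2) * Aser k 1 ∧
      Bser k j = (-1 : PowerSeries ℚ)^(j-1) * q (2*(j:ℤ)-1) * Aser k 1 := by
  intro j
  induction j with
  | zero => intro h; omega
  | succ j ih =>
    intro h1 hk1
    rcases Nat.eq_zero_or_pos j with rfl | hj0
    · constructor
      · norm_num [q_zero]
      · rw [Bser_eq k hk 1 (Finset.mem_Icc.mpr ⟨le_rfl, hk⟩), sum_le_one k hk]
        norm_num [q_one]
    · obtain ⟨hA, hB⟩ := ih hj0 (by omega)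
      have hjm : j ∈ Finset.Icc 1 k := Finset.mem_Icc.mpr ⟨hj0, by omega⟩
      have hjm1 : j + 1 ∈ Finset.Icc 1 k := Finset.mem_Icc.mpr ⟨by omega, hk1⟩
      have hstepA : Aser k (j+1) = Aser k j - PowerSeries.X * Bser k j := by
        rw [Aser_eq k hk (j+1) hjm1, Aser_eq k hk j hjm,
          Sdiff k j (fun i => Bser k i) hjm]
        ring
      have hstepB : Bser k (j+1) = Bser k j + PowerSeries.X * Aser k (j+1) := by
        rw [Bser_eq k hk (j+1) hjm1, Bser_eq k hk j hjm,
          Sdiff_le k j (fun i => Aser k i) hjm1]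
        ring
      have hqA : q (2*(j:ℤ)) = PowerSeries.X * q (2*(j:ℤ)-1) - q (2*(j:ℤ)-2) := by
        have h := q_add_two (2*(j:ℤ)-2)
        rw [show 2*(j:ℤ)-2+2 = 2*(j:ℤ) by ring, show 2*(j:ℤ)-2+1 = 2*(j:ℤ)-1 by ring] at h
        exact h
      have hqB : q (2*(j:ℤ)+1) = PowerSeries.X * q (2*(j:ℤ)) - q (2*(j:ℤ)-1) := by
        have h := q_add_two (2*(j:ℤ)-1)
        rw [show 2*(j:ℤ)-1+2 = 2*(j:ℤ)+1 by ring, show 2*(j:ℤ)-1+1 = 2*(j:ℤ) by ring] at h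
        exact h
      have hpow : (-1 : PowerSeries ℚ)^(j-1) * (-1) = (-1)^j := by
        rw [← pow_succ, show (j-1)+1 = j by omega]
      have hAcl : Aser k (j+1) = (-1 : PowerSeries ℚ)^j * q (2*(j:ℤ)) * Aser k 1 := by
        rw [hstepA, hA, hB, hqA, ← hpow]
        ring
      have hBcl : Bser k (j+1) = (-1 : PowerSeries ℚ)^j * q (2*(j:ℤ)+1) * Aser k 1 := by
        rw [hstepB, hB, hAcl, hqB, ← hpow]
        ring
      have harg1 : (2*((j+1:ℕ):ℤ)-2) = 2*(j:ℤ) := by push_cast; ring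
      have harg2 : (2*((j+1:ℕ):ℤ)-1) = 2*(j:ℤ)+1 := by push_cast; ring
      rw [harg1, harg2, Nat.add_sub_cancel]
      exact ⟨hAcl, hBcl⟩

lemma boundary (k : ℕ) (hk : 1 ≤ k) :
    (-1 : PowerSeries ℚ)^k * q (2*(k:ℤ)) * Aser k 1 = PowerSeries.X := by
  obtain ⟨hA, hB⟩ := closed k hk k hk le_rfl
  have hR := Aser_eq k hk k (Finset.mem_Icc.mpr ⟨hk, le_rfl⟩)
  rw [sum_ge_k k hk (fun i => Bser k i)] at hR
  have hq := q_add_two (2*(k:ℤ)-2)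
  rw [show 2*(k:ℤ)-2+2 = 2*(k:ℤ) by ring, show 2*(k:ℤ)-2+1 = 2*(k:ℤ)-1 by ring] at hq
  have hpow : (-1 : PowerSeries ℚ)^(k-1) * (-1) = (-1)^k := by
    rw [← pow_succ, show (k-1)+1 = k by omega]
  rw [hA, hB] at hR
  rw [hq]
  linear_combination hR - ((PowerSeries.X * q (2*(k:ℤ)-1) - q (2*(k:ℤ)-2)) * Aser k 1) * hpow

lemma sumq : ∀ k : ℕ, 1 ≤ k →
    ∑ j ∈ Finset.Icc 1 k, (-1 : PowerSeries ℚ)^(k-j) * PowerSeries.X * q (2*(j:ℤ)-2)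
      = q (2*(k:ℤ)-1) := by
  intro k
  induction k with
  | zero => omega
  | succ k ih =>
    intro _
    rcases Nat.eq_zero_or_pos k with rfl | hk0
    · rw [show (0:ℕ)+1 = 1 from rfl, Finset.Icc_self, Finset.sum_singleton]
      norm_num [q_zero, q_one]
    · rw [Finset.sum_Icc_succ_top (by omega : 1 ≤ k+1)]
      have hstep : ∀ j ∈ Finset.Icc 1 k, (-1 : PowerSeries ℚ)^(k+1-j) * PowerSeries.X * q (2*(j:ℤ)-2)
          = (-1) * ((-1 : PowerSeries ℚ)^(k-j) * PowerSeries.X * q (2*(j:ℤ)-2)) := by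
        intro j hj
        rw [Finset.mem_Icc] at hj
        rw [show k+1-j = (k-j)+1 by omega, pow_succ]
        ring
      rw [Finset.sum_congr rfl hstep, ← Finset.mul_sum, ih hk0]
      have hq := q_add_two (2*(k:ℤ)-1)
      rw [show 2*(k:ℤ)-1+2 = 2*(k:ℤ)+1 by ring, show 2*(k:ℤ)-1+1 = 2*(k:ℤ) by ring] at hq
      rw [Nat.sub_self, pow_zero, one_mul,
        show (2*((k+1:ℕ):ℤ)-2) = 2*(k:ℤ) by push_cast; ring,
        show (2*((k+1:ℕ):ℤ)-1) = 2*(k:ℤ)+1 by push_cast; ring, hq]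
      ring

lemma Fser (k : ℕ) (hk : 1 ≤ k) :
    (PowerSeries.mk fun n => if 0 < n ∧ n % 2 = 0 then (altCount k (n - 1) : ℚ) else 0)
      = PowerSeries.X * ∑ j ∈ Finset.Icc 1 k, Aser k j := by
  ext n
  cases n with
  | zero => simp [PowerSeries.coeff_zero_X_mul]
  | succ n =>
    rw [PowerSeries.coeff_succ_X_mul, map_sum, PowerSeries.coeff_mk]
    simp only [Aser, PowerSeries.coeff_mk]
    by_cases hpar : (n+1) % 2 = 0
    · rw [if_pos ⟨Nat.succ_pos n, hpar⟩]
      have hnodd : n % 2 = 1 := by omega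
      have h1 : altCount k n = ∑ j ∈ Finset.Icc 1 k, tc k (n-1) (j:ℤ) := by
        conv_lhs => rw [show n = (n-1)+1 by omega]
        rw [altCount_eq, card_Tset_nat]
      rw [show (n+1)-1 = n from rfl, h1]
      push_cast
      refine Finset.sum_congr rfl fun j hj => ?_
      rw [if_pos hnodd]
    · rw [if_neg (fun h => hpar h.2)]
      have h : ∀ j ∈ Finset.Icc 1 k,
          (if n % 2 = 1 then ((tc k (n-1) (j:ℤ) : ℚ)) else 0) = 0 := by
        intro j hj
        rw [if_neg (by omega)]
      rw [Finset.sum_congr rfl h, Finset.sum_const_zero]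

end S3

/-- Corollary 9: `U_{2k}(x/2) · Σ_{n≥1} |A_{2n−1}^{(k)}| x^{2n} = −x U_{2k−1}(x/2)`. -/
theorem statement3 (k : ℕ) (hk : 1 ≤ k) :
    (U2 (2 * k) : PowerSeries ℚ) *
        (PowerSeries.mk fun n => if 0 < n ∧ n % 2 = 0 then (altCount k (n - 1) : ℚ) else 0)
      = -(PowerSeries.X * (U2 (2 * (k : ℤ) - 1) : PowerSeries ℚ)) := by
  have hA1 : S3.q (2*(k:ℤ)) * S3.Aser k 1 = (-1 : PowerSeries ℚ)^k * PowerSeries.X := by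
    have hb := S3.boundary k hk
    have hsq : (-1 : PowerSeries ℚ)^k * (-1 : PowerSeries ℚ)^k = 1 := by
      rw [← pow_add, ← two_mul, pow_mul]
      norm_num
    linear_combination (-1 : PowerSeries ℚ)^k * hb
      - (S3.q (2*(k:ℤ)) * S3.Aser k 1) * hsq
  rw [S3.Fser k hk]
  show S3.q (2*(k:ℤ)) * (PowerSeries.X * ∑ j ∈ Finset.Icc 1 k, S3.Aser k j)
      = -(PowerSeries.X * S3.q (2*(k:ℤ)-1))
  have hterm : ∀ j ∈ Finset.Icc 1 k,
      S3.q (2*(k:ℤ)) * S3.Aser k j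
        = -((-1 : PowerSeries ℚ)^(k-j) * PowerSeries.X * S3.q (2*(j:ℤ)-2)) := by
    intro j hj
    rw [Finset.mem_Icc] at hj
    obtain ⟨hAj, -⟩ := S3.closed k hk j hj.1 hj.2
    rw [hAj]
    have hsign : (-1 : PowerSeries ℚ)^(j-1) * (-1 : PowerSeries ℚ)^k
        = -((-1 : PowerSeries ℚ)^(k-j)) := by
      rw [← pow_add, show (j-1) + k = 2*(j-1) + ((k-j) + 1) by omega,
        pow_add, pow_mul, pow_succ]
      norm_num
      rw [pow_succ]
      ring
    linear_combination ((-1 : PowerSeries ℚ)^(j-1) * S3.q (2*(j:ℤ)-2)) * hA1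
      + (PowerSeries.X * S3.q (2*(j:ℤ)-2)) * hsign
  calc S3.q (2*(k:ℤ)) * (PowerSeries.X * ∑ j ∈ Finset.Icc 1 k, S3.Aser k j)
      = PowerSeries.X * ∑ j ∈ Finset.Icc 1 k, S3.q (2*(k:ℤ)) * S3.Aser k j := by
        simp only [Finset.mul_sum]
        exact Finset.sum_congr rfl fun j _ => by ring
    _ = PowerSeries.X * ∑ j ∈ Finset.Icc 1 k,
          -((-1 : PowerSeries ℚ)^(k-j) * PowerSeries.X * S3.q (2*(j:ℤ)-2)) := by
        rw [Finset.sum_congr rfl hterm]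
    _ = -(PowerSeries.X * S3.q (2*(k:ℤ)-1)) := by
        rw [Finset.sum_neg_distrib, S3.sumq k hk]
        ring
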